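/- (Orthomodularity) Let (X, ⊥, F) be an O-space. Then for all A, B ∈ F with A ⊆ B, one has B = cl(A ∪ (A^⊥ ∩ B)). -/
import Mathlib


variable {X : Type*}

/-- Orthogonal complement: `A^⊥ = {b : b ⊥ a for all a ∈ A}`. -/
def oc (R : X → X → Prop) (A : Set X) : Set X := {b | ∀ a ∈ A, R b a}

/-- Closure: `cl(A) = (A^⊥)^⊥`. -/
def ocl (R : X → X → Prop) (A : Set X) : Set X := oc R (oc R A)

/-- The zero set `Z = {y : y ⊥ x for all x}`. -/
def zset (R : X → X → Prop) : Set X := {y | ∀ x, R y x}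

/-- Sasaki projection `A ⊗ B = cl(B) ∩ (cl(B) ∩ A^⊥)^⊥`. -/
def sproj (R : X → X → Prop) (A B : Set X) : Set X :=
  ocl R B ∩ oc R (ocl R B ∩ oc R A)

/-- Dual of the Sasaki projection: `A ⊕ B = (B^⊥ ⊗ A^⊥)^⊥`. -/
def sdual (R : X → X → Prop) (A B : Set X) : Set X :=
  oc R (sproj R (oc R B) (oc R A))

/-- Set orthogonality: `A ⊥ B` iff `a ⊥ b` for all `a ∈ A`, `b ∈ B`. -/
def orth (R : X → X → Prop) (A B : Set X) : Prop := ∀ a ∈ A, ∀ b ∈ B, R a b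

/-- An O-space: a symmetric relation satisfying Z, together with a family `F`
of subsets satisfying properties F, O and A. -/
structure IsOSpace (R : X → X → Prop) (F : Set (Set X)) : Prop where
  symm : ∀ x y : X, R x y → R y x
  zero : ∀ x : X, R x x → x ∈ zset R
  flats : ∀ A ∈ F, A = ocl R A
  singcl_mem : ∀ x : X, ocl R {x} ∈ F
  z_mem : zset R ∈ F
  oc_mem : ∀ A ∈ F, oc R A ∈ F
  sproj_mem : ∀ A ∈ F, ∀ B ∈ F, sproj R A B ∈ F
  o1 : ∀ x : X, ∀ A ∈ F, x ∈ ocl R (sproj R {x} A ∪ sproj R {x} (oc R A))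
  o2 : ∀ x : X, ∀ A ∈ F, sproj R {x} A ⊆ ocl R ({x} ∪ sproj R {x} (oc R A))
  a : ∀ A ∈ F, ∀ B ∈ F, sproj R A B ⊆ ⋃ a ∈ A, sproj R {a} B

lemma oc_anti' (R : X → X → Prop) {A B : Set X} (hab : A ⊆ B) : oc R B ⊆ oc R A :=
  fun x hx a ha => hx a (hab ha)

lemma ocl_mono' (R : X → X → Prop) {A B : Set X} (hab : A ⊆ B) : ocl R A ⊆ ocl R B :=
  oc_anti' R (oc_anti' R hab)

lemma subset_ocl' (R : X → X → Prop) (hs : ∀ x y, R x y → R y x) (A : Set X) :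
    A ⊆ ocl R A := fun a ha b hb => hs b a (hb a ha)

/-- Orthomodularity. -/
theorem stmt9 (R : X → X → Prop) (F : Set (Set X)) (h : IsOSpace R F)
    (A B : Set X) (hA : A ∈ F) (hB : B ∈ F) (hAB : A ⊆ B) :
    B = ocl R (A ∪ (oc R A ∩ B)) := by
  have hAflat := h.flats A hA
  have hBflat := h.flats B hB
  have hocA : ocl R (oc R A) = oc R A := by
    show oc R (ocl R A) = oc R A
    rw [← hAflat]
  apply Set.Subset.antisymm
  · intro x hx
    have hs1 : sproj R {x} A ⊆ A := fun y hy => by rw [hAflat]; exact hy.1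
    have hs2 : sproj R {x} (oc R A) ⊆ oc R A ∩ B := by
      intro y hy
      refine ⟨by rw [← hocA]; exact hy.1, ?_⟩
      have ho2 := h.o2 x (oc R A) (h.oc_mem A hA) hy
      have heq : oc R (oc R A) = A := hAflat.symm
      rw [heq] at ho2
      have hsubB : ({x} : Set X) ∪ sproj R {x} A ⊆ B := by
        intro z hz
        rcases hz with hz | hz
        · exact Set.mem_singleton_iff.mp hz ▸ hx
        · exact hAB (hs1 hz)
      have := ocl_mono' R hsubB ho2
      rwa [← hBflat] at this
    have h1 := h.o1 x A hA
    exact ocl_mono' R (Set.union_subset_union hs1 hs2) h1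
  · have : A ∪ (oc R A ∩ B) ⊆ B := Set.union_subset hAB fun y hy => hy.2
    intro y hy
    rw [hBflat]
    exact ocl_mono' R this hy
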